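/- arXiv:0810.3103 — 7 statements merged into one kernel-verified Lean document; each statement's English description precedes it below -/
import Mathlib

section
/- Conversely, if f and g are nonzero coprime polynomials such that f/g is a rational first integral of a polynomial vector field v (i.e., g·L(f) = f·L(g)), then f and g are Darboux polynomials of v with the same polynomial cofactor λ. -/
open MvPolynomial

theorem stmt5 (n : ℕ) (v : Fin n → MvPolynomial (Fin n) ℝ)
    (f g : MvPolynomial (Fin n) ℝ)
    (hf : f ≠ 0) (hg : g ≠ 0) (hcop : IsRelPrime f g)
    (h : g * (∑ i, v i * pderiv i f) = f * (∑ i, v i * pderiv i g)) :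
    ∃ l : MvPolynomial (Fin n) ℝ,
      (∑ i, v i * pderiv i f = l * f) ∧ (∑ i, v i * pderiv i g = l * g) := by
  have hdvd : f ∣ g * (∑ i, v i * pderiv i f) := ⟨∑ i, v i * pderiv i g, h⟩
  have hdvd2 : f ∣ ∑ i, v i * pderiv i f :=
    hcop.dvd_of_dvd_mul_left hdvd
  obtain ⟨l, hl⟩ := hdvd2
  refine ⟨l, by rw [hl, mul_comm], ?_⟩
  have : f * (∑ i, v i * pderiv i g) = f * (l * g) := by
    rw [← h, hl]; ring
  exact mul_left_cancel₀ hf this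
end

section
/- Let f be a homogeneous Darboux polynomial of degree m of the three-dimensional Lotka–Volterra system with cofactor α·x1 + β·x2 + γ·x3. If γ ≠ 0, then the coefficient of x3^m in f is zero; equivalently, f can be written as f = x1·φ + x2·ψ for some polynomials φ, ψ. -/
open MvPolynomial

/-- Lie derivative along the 3D Lotka-Volterra vector field with parameters r, s, t. -/
noncomputable def LV (r s t : ℝ) (f : MvPolynomial (Fin 3) ℝ) : MvPolynomial (Fin 3) ℝ :=
  X 0 * (C r * X 1 + C s * X 2) * pderiv 0 f
  + X 1 * (C (-r) * X 0 + C t * X 2) * pderiv 1 f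
  + X 2 * (C (-s) * X 0 + C (-t) * X 1) * pderiv 2 f

/-!
The plane `x₁ = x₂ = 0` is invariant, since the third component of the vector field is
`x₃(-s x₁ - t x₂)`; hence `L f` lies in the ideal `I = (x₁, x₂)`. Reducing
`L f = (α x₁ + β x₂ + γ x₃) f` modulo `I` gives `γ x₃ f ∈ I`, and as `I` is a monomial ideal not
involving `x₃`, `f ∈ I`. In particular no monomial of `f` is a pure power of `x₃`.
-/

namespace MvPolynomial

variable {σ R : Type*} [CommSemiring R] {s : Set σ} {j : σ} {p : MvPolynomial σ R}

theorem mem_ideal_span_X_image_of_X_mul_mem (hj : j ∉ s)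
    (h : X j * p ∈ Ideal.span (X '' s)) : p ∈ Ideal.span (X '' s) := by
  classical
  rw [mem_ideal_span_X_image] at h ⊢
  intro d hd
  obtain ⟨i, hi, hne⟩ :=
    h (Finsupp.single j 1 + d) (by rw [support_X_mul]; exact Finset.mem_map_of_mem _ hd)
  have hij : j ≠ i := ne_of_mem_of_not_mem hi hj |>.symm
  exact ⟨i, hi, by simpa [Finsupp.single_apply, hij] using hne⟩

theorem coeff_single_eq_zero_of_mem_ideal_span_X_image (hj : j ∉ s)
    (h : p ∈ Ideal.span (X '' s)) (n : ℕ) : p.coeff (Finsupp.single j n) = 0 := by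
  by_contra hc
  obtain ⟨i, hi, hne⟩ := mem_ideal_span_X_image.mp h _ (mem_support_iff.mpr hc)
  have hji : j ≠ i := ne_of_mem_of_not_mem hi hj |>.symm
  exact hne (by simp [hji])

end MvPolynomial

theorem LV_mem_span_X_zero_X_one (r s t : ℝ) (f : MvPolynomial (Fin 3) ℝ) :
    LV r s t f ∈ Ideal.span {X 0, X 1} :=
  Ideal.mem_span_pair.mpr
    ⟨(C r * X 1 + C s * X 2) * pderiv 0 f + C (-s) * X 2 * pderiv 2 f,
      (C (-r) * X 0 + C t * X 2) * pderiv 1 f + C (-t) * X 2 * pderiv 2 f,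
      by unfold LV; ring⟩

theorem mem_span_X_zero_X_one_of_LV_eq {r s t α β γ : ℝ} {f : MvPolynomial (Fin 3) ℝ}
    (hD : LV r s t f = (C α * X 0 + C β * X 1 + C γ * X 2) * f) (hγ : γ ≠ 0) :
    f ∈ Ideal.span (X '' {0, 1}) := by
  refine mem_ideal_span_X_image_of_X_mul_mem (j := 2) (by decide) ?_
  have hinv : C γ⁻¹ * C γ = (1 : MvPolynomial (Fin 3) ℝ) := by
    rw [← C_mul, inv_mul_cancel₀ hγ, C_1]
  obtain ⟨a, b, hab⟩ := Ideal.mem_span_pair.mp (LV_mem_span_X_zero_X_one r s t f)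
  rw [Set.image_pair, Ideal.mem_span_pair]
  exact ⟨C γ⁻¹ * (a - C α * f), C γ⁻¹ * (b - C β * f),
    by linear_combination C γ⁻¹ * hab + C γ⁻¹ * hD + X 2 * f * hinv⟩

theorem stmt8_general (r s t : ℝ) (m : ℕ) (f : MvPolynomial (Fin 3) ℝ)
    (α β γ : ℝ)
    (hD : LV r s t f = (C α * X 0 + C β * X 1 + C γ * X 2) * f)
    (hγ : γ ≠ 0) :
    f.coeff (Finsupp.single 2 m) = 0
    ∧ ∃ φ ψ : MvPolynomial (Fin 3) ℝ, f = X 0 * φ + X 1 * ψ := by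
  have hf := mem_span_X_zero_X_one_of_LV_eq hD hγ
  refine ⟨coeff_single_eq_zero_of_mem_ideal_span_X_image (by decide) hf m, ?_⟩
  rw [Set.image_pair, Ideal.mem_span_pair] at hf
  obtain ⟨φ, ψ, h⟩ := hf
  exact ⟨φ, ψ, by rw [← h]; ring⟩

theorem stmt8 (r s t : ℝ) (m : ℕ) (f : MvPolynomial (Fin 3) ℝ)
    (hhom : f.IsHomogeneous m) (α β γ : ℝ)
    (hD : LV r s t f = (C α * X 0 + C β * X 1 + C γ * X 2) * f)
    (hγ : γ ≠ 0) :
    f.coeff (Finsupp.single 2 m) = 0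
    ∧ ∃ φ ψ : MvPolynomial (Fin 3) ℝ, f = X 0 * φ + X 1 * ψ :=
  stmt8_general r s t m f α β γ hD hγ
end

section
/- Let f be a homogeneous Darboux polynomial of degree m of the three-dimensional Lotka–Volterra system with cofactor α·x1 + β·x2 + γ·x3, and suppose γ ≠ 0 and s = 0. Then x2 divides f. -/
open MvPolynomial

lemma MvPolynomial.coeff_eq_zero_of_X_dvd {σ R : Type*} [CommSemiring R] {i : σ}
    {p : MvPolynomial σ R} (h : X i ∣ p) {d : σ →₀ ℕ} (hd : d i = 0) : coeff d p = 0 := by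
  classical
  obtain ⟨q, rfl⟩ := h
  rw [coeff_X_mul', if_neg (by simpa using hd)]

lemma X_one_dvd_LV_of_s_eq_zero (r t : ℝ) (f : MvPolynomial (Fin 3) ℝ) : X 1 ∣ LV r 0 t f :=
  ⟨X 0 * C r * pderiv 0 f + (C (-r) * X 0 + C t * X 2) * pderiv 1 f
      + X 2 * C (-t) * pderiv 2 f, by simp only [LV, neg_zero, C_0]; ring⟩

lemma not_X_one_dvd_linear (α β : ℝ) {γ : ℝ} (hγ : γ ≠ 0) :
    ¬ X 1 ∣ (C α * X 0 + C β * X 1 + C γ * X 2 : MvPolynomial (Fin 3) ℝ) := by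
  intro h
  have hcoeff : coeff (Finsupp.single 2 1) (C α * X 0 + C β * X 1 + C γ * X 2 :
      MvPolynomial (Fin 3) ℝ) = γ := by
    simp [coeff_X, Finsupp.single_eq_single_iff]
  exact hγ (hcoeff ▸ coeff_eq_zero_of_X_dvd h (by simp))

theorem stmt9_general (r s t : ℝ) (f : MvPolynomial (Fin 3) ℝ)
    (α β γ : ℝ)
    (hD : LV r s t f = (C α * X 0 + C β * X 1 + C γ * X 2) * f)
    (hγ : γ ≠ 0) (hs : s = 0) :
    X 1 ∣ f := by
  subst hs
  have hdvd : X 1 ∣ (C α * X 0 + C β * X 1 + C γ * X 2) * f :=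
    hD ▸ X_one_dvd_LV_of_s_eq_zero r t f
  exact (X_prime.dvd_or_dvd hdvd).resolve_left (not_X_one_dvd_linear α β hγ)

theorem stmt9 (r s t : ℝ) (m : ℕ) (f : MvPolynomial (Fin 3) ℝ)
    (hhom : f.IsHomogeneous m) (α β γ : ℝ)
    (hD : LV r s t f = (C α * X 0 + C β * X 1 + C γ * X 2) * f)
    (hγ : γ ≠ 0) (hs : s = 0) :
    X 1 ∣ f :=
  stmt9_general r s t f α β γ hD hγ hs
end

section
/- Let f be a homogeneous Darboux polynomial of degree m of the three-dimensional Lotka–Volterra system with cofactor α·x1 + β·x2 + γ·x3. If s ≠ 0 and γ ∉ {s, 2s, ..., ms}, and moreover γ ≠ 0, then x2 divides f. -/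
/-!
Write `f_{a,c}` for the coefficient of `x₁ ^ a * x₃ ^ c` in `f`. On the monomials free of `x₂`
the Darboux equation only sees `s x₁ x₃ (∂₁ f - ∂₃ f) = (α x₁ + γ x₃) f`. Comparing the
coefficients of `x₃ ^ (c + 1)` gives `γ f_{0,c} = 0`, and comparing those of
`x₁ ^ (a + 1) x₃ ^ (c + 1)` gives `(s (a + 1) - γ) f_{a+1,c} = (α + s (c + 1)) f_{a,c+1}`.
Since `γ ≠ 0` and `γ ≠ (a + 1) s` whenever `f_{a+1,c}` can be nonzero (then `a + 1 ≤ m`),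
induction on `a` shows that every `x₂`-free coefficient of `f` vanishes.
-/

open MvPolynomial

theorem MvPolynomial.X_dvd_of_coeff_eq_zero {σ R : Type*} [CommSemiring R] {i : σ}
    {f : MvPolynomial σ R} (h : ∀ d : σ →₀ ℕ, d i = 0 → coeff d f = 0) : X i ∣ f := by
  rw [f.as_sum]
  exact Finset.dvd_sum fun d _ => X_dvd_monomial.mpr ((em (d i = 0)).imp (h d) id)

/-- The exponent of `x₁ ^ a * x₃ ^ c`; the variables `x₁, x₂, x₃` are `X 0, X 1, X 2`. -/
noncomputable def expX0X2 (a c : ℕ) : Fin 3 →₀ ℕ := Finsupp.single 0 a + Finsupp.single 2 c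

namespace expX0X2

@[simp] lemma apply_zero (a c : ℕ) : expX0X2 a c 0 = a := by simp [expX0X2]

@[simp] lemma apply_one (a c : ℕ) : expX0X2 a c 1 = 0 := by simp [expX0X2]

@[simp] lemma apply_two (a c : ℕ) : expX0X2 a c 2 = c := by simp [expX0X2]

@[simp] lemma add_single_zero (a c : ℕ) :
    expX0X2 a c + Finsupp.single 0 1 = expX0X2 (a + 1) c := by
  simp only [expX0X2, Finsupp.single_add]; abel

@[simp] lemma add_single_two (a c : ℕ) :
    expX0X2 a c + Finsupp.single 2 1 = expX0X2 a (c + 1) := by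
  simp only [expX0X2, Finsupp.single_add]; abel

@[simp] lemma succ_sub_single_zero (a c : ℕ) :
    expX0X2 (a + 1) c - Finsupp.single 0 1 = expX0X2 a c := by
  rw [← add_single_zero, add_tsub_cancel_right]

@[simp] lemma succ_sub_single_two (a c : ℕ) :
    expX0X2 a (c + 1) - Finsupp.single 2 1 = expX0X2 a c := by
  rw [← add_single_two, add_tsub_cancel_right]

lemma weight_one (a c : ℕ) : Finsupp.weight 1 (expX0X2 a c) = a + c := by
  simp [expX0X2, Finsupp.weight_apply, Finsupp.sum_add_index', Finsupp.sum_single_index]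

lemma eq_of_apply_one_eq_zero {d : Fin 3 →₀ ℕ} (hd : d 1 = 0) : d = expX0X2 (d 0) (d 2) := by
  ext i
  fin_cases i <;> simp [hd]

end expX0X2

-- Both sides are normalised with every `X i` on the left, the shape `coeff_X_mul'` reads.
lemma LV_eq (r s t : ℝ) (f : MvPolynomial (Fin 3) ℝ) : LV r s t f =
    C r * (X 1 * (X 0 * pderiv 0 f)) + C s * (X 0 * (X 2 * pderiv 0 f))
    + (C (-r) * (X 1 * (X 0 * pderiv 1 f)) + C t * (X 1 * (X 2 * pderiv 1 f)))
    + (C (-s) * (X 0 * (X 2 * pderiv 2 f)) + C (-t) * (X 1 * (X 2 * pderiv 2 f))) := by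
  rw [LV]; ring

lemma cofactor_mul_eq (α β γ : ℝ) (f : MvPolynomial (Fin 3) ℝ) :
    (C α * X 0 + C β * X 1 + C γ * X 2) * f
      = C α * (X 0 * f) + C β * (X 1 * f) + C γ * (X 2 * f) := by
  ring

section Darboux

variable {r s t α β γ : ℝ} {f : MvPolynomial (Fin 3) ℝ}

lemma gamma_mul_coeff_expX0X2_zero (hD : LV r s t f = (C α * X 0 + C β * X 1 + C γ * X 2) * f)
    (c : ℕ) : γ * coeff (expX0X2 0 c) f = 0 := by
  have h := congrArg (coeff (expX0X2 0 (c + 1))) hD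
  rw [LV_eq, cofactor_mul_eq] at h
  simpa [coeff_X_mul', Finsupp.mem_support_iff] using h.symm

lemma coeff_expX0X2_succ (hD : LV r s t f = (C α * X 0 + C β * X 1 + C γ * X 2) * f)
    (a c : ℕ) : (s * (a + 1) - γ) * coeff (expX0X2 (a + 1) c) f
      = (α + s * (c + 1)) * coeff (expX0X2 a (c + 1)) f := by
  have h := congrArg (coeff (expX0X2 (a + 1) (c + 1))) hD
  rw [LV_eq, cofactor_mul_eq] at h
  simp only [coeff_add, coeff_C_mul, coeff_X_mul', Finsupp.mem_support_iff, coeff_pderiv,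
    expX0X2.apply_zero, expX0X2.apply_one, expX0X2.apply_two, expX0X2.succ_sub_single_zero,
    expX0X2.succ_sub_single_two, expX0X2.add_single_zero, expX0X2.add_single_two] at h
  norm_num at h
  linear_combination h

lemma coeff_expX0X2_eq_zero {m : ℕ} (hhom : f.IsHomogeneous m)
    (hD : LV r s t f = (C α * X 0 + C β * X 1 + C γ * X 2) * f)
    (hns : ∀ n : ℕ, 1 ≤ n → n ≤ m → γ ≠ n * s) (hγ : γ ≠ 0) (a c : ℕ) :
    coeff (expX0X2 a c) f = 0 := by
  induction a generalizing c with
  | zero => exact (mul_eq_zero.mp (gamma_mul_coeff_expX0X2_zero hD c)).resolve_left hγ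
  | succ a ih =>
    by_contra hne
    have hdeg : a + 1 + c = m := expX0X2.weight_one (a + 1) c ▸ hhom hne
    have hkey := coeff_expX0X2_succ hD a c
    rw [ih (c + 1), mul_zero, mul_eq_zero, sub_eq_zero] at hkey
    refine hns (a + 1) (by omega) (by omega) ?_
    push_cast
    linarith [hkey.resolve_right hne]

end Darboux

theorem stmt10_general (r s t : ℝ) (m : ℕ) (f : MvPolynomial (Fin 3) ℝ)
    (hhom : f.IsHomogeneous m) (α β γ : ℝ)
    (hD : LV r s t f = (C α * X 0 + C β * X 1 + C γ * X 2) * f)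
    (hns : ∀ n : ℕ, 1 ≤ n → n ≤ m → γ ≠ n * s)
    (hγ : γ ≠ 0) :
    X 1 ∣ f :=
  X_dvd_of_coeff_eq_zero fun d hd =>
    expX0X2.eq_of_apply_one_eq_zero hd ▸ coeff_expX0X2_eq_zero hhom hD hns hγ (d 0) (d 2)

theorem stmt10 (r s t : ℝ) (m : ℕ) (f : MvPolynomial (Fin 3) ℝ)
    (hhom : f.IsHomogeneous m) (α β γ : ℝ)
    (hD : LV r s t f = (C α * X 0 + C β * X 1 + C γ * X 2) * f)
    (hs : s ≠ 0) (hns : ∀ n : ℕ, 1 ≤ n → n ≤ m → γ ≠ n * s)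
    (hγ : γ ≠ 0) :
    X 1 ∣ f :=
  stmt10_general r s t m f hhom α β γ hD hns hγ
end

section
/- Let f be a nonzero homogeneous Darboux polynomial of degree m of the three-dimensional Lotka–Volterra system with cofactor α·x1 + β·x2 + γ·x3. Then either γ = 0, or γ = γ1·s + γ2·t for some non-negative integers γ1, γ2 with 1 ≤ γ1 + γ2 ≤ m. -/
/-!
Choose a monomial `x^d` of `f` whose exponent of `x₃` is maximal and compare the coefficients
of `x^d x₃` on both sides of `L f = (α x₁ + β x₂ + γ x₃) f`. Every term of either side that
reaches `x^d x₃` through multiplication by `x₁` or `x₂` would come from a monomial of `f` with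
too large an exponent of `x₃`, so only the terms carrying a factor `x₃` survive: on the left
`s x₃ · x₁∂₁f + t x₃ · x₂∂₂f` gives `(d₁ s + d₂ t) c`, on the right `γ x₃ f` gives `γ c`, where
`c ≠ 0` is the coefficient of `x^d`. Hence `γ = d₁ s + d₂ t` with `d₁ + d₂ ≤ |d| = m`.
Indices are shifted in the code: `xᵢ` is `X (i - 1)` and `dᵢ` is `d (i - 1)`.
-/

open MvPolynomial

namespace MvPolynomial

variable {σ R : Type*} [CommSemiring R]

theorem coeff_X_mul_pderiv (i : σ) (f : MvPolynomial σ R) (μ : σ →₀ ℕ) :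
    coeff μ (X i * pderiv i f) = μ i * coeff μ f := by
  induction f using MvPolynomial.induction_on' with
  | add p q hp hq => simp only [map_add, mul_add, coeff_add, hp, hq]
  | monomial ν a =>
    classical
    rw [X_mul_pderiv_monomial, coeff_smul, coeff_monomial]
    split_ifs with h
    · subst h; simp [nsmul_eq_mul]
    · simp

theorem degreeOf_X_mul_pderiv_le (i k : σ) (f : MvPolynomial σ R) :
    degreeOf k (X i * pderiv i f) ≤ degreeOf k f := by
  refine degreeOf_le_iff.2 fun ν hν => monomial_le_degreeOf k (mem_support_iff.2 ?_)
  rw [mem_support_iff, coeff_X_mul_pderiv] at hν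
  exact right_ne_zero_of_mul hν

theorem coeff_X_mul_eq_zero_of_degreeOf_lt {j k : σ} (hjk : j ≠ k) {g : MvPolynomial σ R}
    {μ : σ →₀ ℕ} (h : degreeOf k g < μ k) : coeff μ (X j * g) = 0 := by
  classical
  rw [coeff_X_mul']
  split_ifs
  · refine notMem_support_iff.1 fun hmem => ?_
    have := monomial_le_degreeOf k hmem
    simp only [Finsupp.tsub_apply, Finsupp.single_eq_of_ne' hjk, Nat.sub_zero] at this
    omega
  · rfl

end MvPolynomial

section TopCoefficient

variable {f : MvPolynomial (Fin 3) ℝ} {d : Fin 3 →₀ ℕ}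

theorem coeff_LV_of_degreeOf_eq (r s t : ℝ) (hd : d 2 = degreeOf 2 f) :
    coeff (Finsupp.single 2 1 + d) (LV r s t f) = (d 0 * s + d 1 * t) * coeff d f := by
  have vanish : ∀ j ≠ (2 : Fin 3), ∀ i,
      coeff (Finsupp.single 2 1 + d) (X j * (X i * pderiv i f)) = 0 := fun j hj i =>
    coeff_X_mul_eq_zero_of_degreeOf_lt hj <| by
      have := degreeOf_X_mul_pderiv_le i 2 f
      simp only [Finsupp.coe_add, Pi.add_apply, Finsupp.single_eq_same]
      omega
  have expand : LV r s t f =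
      C r * (X 1 * (X 0 * pderiv 0 f)) + C s * (X 2 * (X 0 * pderiv 0 f))
      + C (-r) * (X 0 * (X 1 * pderiv 1 f)) + C t * (X 2 * (X 1 * pderiv 1 f))
      + C (-s) * (X 0 * (X 2 * pderiv 2 f)) + C (-t) * (X 1 * (X 2 * pderiv 2 f)) := by
    unfold LV; ring
  rw [expand]
  simp only [coeff_add, coeff_C_mul, coeff_X_mul, coeff_X_mul_pderiv,
    vanish 0 (by decide), vanish 1 (by decide)]
  ring

theorem coeff_linear_mul_of_degreeOf_eq (α β γ : ℝ) (hd : d 2 = degreeOf 2 f) :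
    coeff (Finsupp.single 2 1 + d) ((C α * X 0 + C β * X 1 + C γ * X 2) * f) =
      γ * coeff d f := by
  have vanish : ∀ j ≠ (2 : Fin 3), coeff (Finsupp.single 2 1 + d) (X j * f) = 0 := fun j hj =>
    coeff_X_mul_eq_zero_of_degreeOf_lt hj <| by
      simp only [Finsupp.coe_add, Pi.add_apply, Finsupp.single_eq_same]
      omega
  simp only [add_mul, mul_assoc, coeff_add, coeff_C_mul, coeff_X_mul, vanish 0 (by decide),
    vanish 1 (by decide)]
  ring

end TopCoefficient

theorem stmt11 (r s t : ℝ) (m : ℕ) (f : MvPolynomial (Fin 3) ℝ)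
    (hf : f ≠ 0) (hhom : f.IsHomogeneous m) (α β γ : ℝ)
    (hD : LV r s t f = (C α * X 0 + C β * X 1 + C γ * X 2) * f) :
    γ = 0 ∨ ∃ γ1 γ2 : ℕ, γ = γ1 * s + γ2 * t ∧ 1 ≤ γ1 + γ2 ∧ γ1 + γ2 ≤ m := by
  obtain ⟨d, hd, htop⟩ :=
    Finset.exists_mem_eq_sup f.support (support_nonempty.2 hf) (fun ν => ν 2)
  rw [← degreeOf_eq_sup] at htop
  have hc : coeff d f ≠ 0 := mem_support_iff.1 hd
  have hγ : γ = d 0 * s + d 1 * t := by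
    refine (mul_right_cancel₀ hc ?_).symm
    rw [← coeff_LV_of_degreeOf_eq r s t htop.symm, hD,
      coeff_linear_mul_of_degreeOf_eq α β γ htop.symm]
  have hdeg : d 0 + d 1 + d 2 = m := by
    simpa [Finsupp.weight_apply, Finsupp.sum_fintype, Fin.sum_univ_three] using hhom hc
  rcases Nat.eq_zero_or_pos (d 0 + d 1) with h0 | hpos
  · left
    rw [hγ, Nat.eq_zero_of_add_eq_zero_right h0, Nat.eq_zero_of_add_eq_zero_left h0]
    simp
  · exact Or.inr ⟨d 0, d 1, hγ, hpos, by omega⟩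
end

section
/- If s = t, then the polynomial x1 + x2 is a Darboux polynomial of the three-dimensional Lotka–Volterra system with cofactor s·x3; consequently, for all non-negative integers i, j, k, l, the polynomial x1^i·x2^j·x3^k·(x1+x2)^l is a Darboux polynomial with cofactor (−rj − sk)·x1 + (ri − sk)·x2 + (si + sj + ls)·x3. -/
open MvPolynomial

lemma LV_mul (r s t : ℝ) (f g : MvPolynomial (Fin 3) ℝ) :
    LV r s t (f * g) = LV r s t f * g + f * LV r s t g := by
  simp only [LV, pderiv_mul]
  ring

lemma LV_pow (r s t : ℝ) (a f : MvPolynomial (Fin 3) ℝ) (h : LV r s t f = a * f) (n : ℕ) :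
    LV r s t (f ^ n) = (n : MvPolynomial (Fin 3) ℝ) * a * f ^ n := by
  induction n with
  | zero => simp [LV]
  | succ n ih =>
    rw [pow_succ, LV_mul, ih, h]
    push_cast
    ring

lemma LV_X0 (r s t : ℝ) : LV r s t (X 0) = (C r * X 1 + C s * X 2) * X 0 := by
  simp [LV]; ring
lemma LV_X1 (r s t : ℝ) : LV r s t (X 1) = (C (-r) * X 0 + C t * X 2) * X 1 := by
  simp [LV]; ring
lemma LV_X2 (r s t : ℝ) : LV r s t (X 2) = (C (-s) * X 0 + C (-t) * X 1) * X 2 := by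
  simp [LV]; ring

theorem stmt16 (r s t : ℝ) (hst : s = t) :
    LV r s t (X 0 + X 1) = C s * X 2 * (X 0 + X 1)
    ∧ ∀ i j k l : ℕ,
      LV r s t (X 0 ^ i * X 1 ^ j * X 2 ^ k * (X 0 + X 1) ^ l)
        = (C (-(r * j) - s * k) * X 0 + C (r * i - s * k) * X 1
            + C (s * i + s * j + l * s) * X 2)
          * (X 0 ^ i * X 1 ^ j * X 2 ^ k * (X 0 + X 1) ^ l) := by
  subst hst
  have h01 : LV r s s (X 0 + X 1) = C s * X 2 * (X 0 + X 1) := by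
    simp [LV]; ring
  refine ⟨h01, fun i j k l => ?_⟩
  rw [LV_mul, LV_mul, LV_mul,
    LV_pow r s s _ _ (LV_X0 r s s) i,
    LV_pow r s s _ _ (LV_X1 r s s) j,
    LV_pow r s s _ _ (LV_X2 r s s) k,
    LV_pow r s s (C s * X 2) _ h01 l]
  simp only [map_sub, map_add, map_mul, map_neg, map_natCast]
  ring
end

section
/- If r = s, then x2 + x3 is a Darboux polynomial of the three-dimensional Lotka–Volterra system with cofactor −r·x1; if r = −t, then x1 + x3 is a Darboux polynomial with cofactor r·x2. -/
open MvPolynomial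

theorem stmt17 (r s t : ℝ) :
    (r = s → LV r s t (X 1 + X 2) = C (-r) * X 0 * (X 1 + X 2))
    ∧ (r = -t → LV r s t (X 0 + X 2) = C r * X 1 * (X 0 + X 2)) := by
  constructor
  · rintro rfl
    simp only [LV, map_add, pderiv_X, Pi.single_apply]
    norm_num [Fin.ext_iff]
    ring
  · rintro rfl
    simp only [LV, map_add, pderiv_X, Pi.single_apply]
    norm_num [Fin.ext_iff]
    ring
end
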